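/- arXiv:1011.1328 — 7 statements merged into one kernel-verified Lean document; each statement's English description precedes it below -/
import Mathlib

section
/- Let ξ and α be nonnegative random variables on a probability space (Ω, F, P), let β > 0, and let {Γ_x : x ≥ 0} be a family of events such that P({ξ > α + βx} ∩ Γ_x) = 0 for every x ≥ 0. Assume there exists an integrable function M : [0,∞) → [0,∞) with P(Γ_x^c) ≤ M(x) for all x ≥ 0. Then E ξ ≤ E α + β M*, where M* = ∫_0^∞ M(x) dx. -/
open MeasureTheory Set

/-! Since `ξ ≤ α + (ξ - α)⁺`, it suffices to bound `E (ξ - α)⁺`. By the layer-cake formula this is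
`∫_0^∞ P(ξ - α > t) dt`, and for `t = βx` the event `{ξ - α > t}` lies in `Γ_xᶜ` up to a null set,
so the integrand is at most `M(t / β)`, whose integral is `β M*`. -/

lemma measure_le_measure_compl_of_measure_inter_eq_zero {Ω : Type*} [MeasurableSpace Ω]
    {μ : Measure Ω} {s t : Set Ω} (h : μ (s ∩ t) = 0) : μ s ≤ μ tᶜ :=
  calc μ s ≤ μ (s ∩ t) + μ (s \ t) := measure_le_inter_add_sdiff μ s t
    _ = μ (s \ t) := by rw [h, zero_add]
    _ ≤ μ tᶜ := measure_mono fun _ hω => hω.2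

lemma lintegral_ofReal_le_add_lintegral_ofReal_sub {Ω : Type*} [MeasurableSpace Ω]
    {μ : Measure Ω} (f : Ω → ℝ) {g : Ω → ℝ} (hg : AEMeasurable g μ) :
    ∫⁻ ω, ENNReal.ofReal (f ω) ∂μ ≤
      ∫⁻ ω, ENNReal.ofReal (g ω) ∂μ + ∫⁻ ω, ENNReal.ofReal (f ω - g ω) ∂μ := by
  rw [← lintegral_add_left' hg.ennreal_ofReal]
  refine lintegral_mono fun ω => ?_
  calc ENNReal.ofReal (f ω) = ENNReal.ofReal (g ω + (f ω - g ω)) := by rw [add_sub_cancel]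
    _ ≤ _ := ENNReal.ofReal_add_le

lemma lintegral_ofReal_le_of_measure_lt_le {Ω : Type*} [MeasurableSpace Ω] {μ : Measure Ω}
    {f : Ω → ℝ} (hf : AEMeasurable f μ) {F : ℝ → ENNReal}
    (hF : ∀ t > 0, μ {ω | t < f ω} ≤ F t) :
    ∫⁻ ω, ENNReal.ofReal (f ω) ∂μ ≤ ∫⁻ t in Ioi 0, F t := by
  have hpos : ∫⁻ ω, ENNReal.ofReal (f ω) ∂μ = ∫⁻ ω, ENNReal.ofReal (max (f ω) 0) ∂μ := by
    simp
  rw [hpos, lintegral_eq_lintegral_meas_lt μ (f := fun ω => max (f ω) 0)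
    (Filter.Eventually.of_forall fun _ => le_max_right _ _) (hf.max aemeasurable_const)]
  refine setLIntegral_mono' measurableSet_Ioi fun t (ht : 0 < t) => ?_
  convert hF t ht using 3 with ω
  simp [ht.not_gt]

lemma lintegral_Ioi_ofReal_comp_div {M : ℝ → ℝ} (hM : IntegrableOn M (Ioi 0))
    (hM0 : ∀ x > 0, 0 ≤ M x) {β : ℝ} (hβ : 0 < β) :
    ∫⁻ t in Ioi 0, ENNReal.ofReal (M (t / β)) = ENNReal.ofReal (β * ∫ x in Ioi 0, M x) := by
  have hβ' : 0 < β⁻¹ := inv_pos.mpr hβ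
  simp_rw [div_eq_inv_mul]
  rw [← ofReal_integral_eq_lintegral_ofReal, integral_comp_mul_left_Ioi M 0 hβ', mul_zero,
    inv_inv, smul_eq_mul]
  · exact (integrableOn_Ioi_comp_mul_left_iff M 0 hβ').mpr (by rwa [mul_zero])
  · filter_upwards [ae_restrict_mem measurableSet_Ioi] with t (ht : 0 < t)
    exact hM0 _ (mul_pos hβ' ht)

theorem stmt0_general {Ω : Type*} [MeasurableSpace Ω] (P : Measure Ω) [IsProbabilityMeasure P]
    (ξ α : Ω → ℝ) (hξm : Measurable ξ) (hαm : Measurable α)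
    (β : ℝ) (hβ : 0 < β) (Γ : ℝ → Set Ω)
    (hΓ : ∀ x ≥ (0:ℝ), P ({ω | ξ ω > α ω + β * x} ∩ Γ x) = 0)
    (M : ℝ → ℝ)
    (hMint : IntegrableOn M (Set.Ici 0))
    (hMdom : ∀ x ≥ (0:ℝ), (P ((Γ x)ᶜ)).toReal ≤ M x) :
    ∫⁻ ω, ENNReal.ofReal (ξ ω) ∂P ≤
      ∫⁻ ω, ENNReal.ofReal (α ω) ∂P +
        ENNReal.ofReal (β * ∫ x in Set.Ici (0:ℝ), M x) := by
  have hM0 : ∀ x ≥ 0, 0 ≤ M x := fun x hx => ENNReal.toReal_nonneg.trans (hMdom x hx)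
  have htail : ∀ t > 0, P {ω | t < ξ ω - α ω} ≤ ENNReal.ofReal (M (t / β)) := by
    intro t ht
    have hx : 0 ≤ t / β := by positivity
    have hsub : {ω | t < ξ ω - α ω} ⊆ {ω | ξ ω > α ω + β * (t / β)} := fun ω hω => by
      show ξ ω > α ω + β * (t / β)
      rw [mul_div_cancel₀ t hβ.ne']
      exact lt_sub_iff_add_lt'.mp hω
    calc P {ω | t < ξ ω - α ω} ≤ P (Γ (t / β))ᶜ :=
          (measure_mono hsub).trans (measure_le_measure_compl_of_measure_inter_eq_zero (hΓ _ hx))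
      _ ≤ ENNReal.ofReal (M (t / β)) :=
          (ENNReal.le_ofReal_iff_toReal_le (measure_ne_top _ _) (hM0 _ hx)).mpr (hMdom _ hx)
  calc ∫⁻ ω, ENNReal.ofReal (ξ ω) ∂P
      ≤ ∫⁻ ω, ENNReal.ofReal (α ω) ∂P + ∫⁻ ω, ENNReal.ofReal (ξ ω - α ω) ∂P :=
        lintegral_ofReal_le_add_lintegral_ofReal_sub ξ hαm.aemeasurable
    _ ≤ ∫⁻ ω, ENNReal.ofReal (α ω) ∂P + ∫⁻ t in Ioi 0, ENNReal.ofReal (M (t / β)) := by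
        gcongr
        exact lintegral_ofReal_le_of_measure_lt_le (hξm.sub hαm).aemeasurable htail
    _ = _ := by
        rw [lintegral_Ioi_ofReal_comp_div (hMint.mono_set Ioi_subset_Ici_self)
          (fun x hx => hM0 x hx.le) hβ, integral_Ici_eq_integral_Ioi]

/-- Mean forecast inequality (Galtchouk–Pergamenshchikov):
if `ξ, α ≥ 0`, `β > 0`, events `Γ x` satisfy `P({ξ > α + βx} ∩ Γ x) = 0` for all `x ≥ 0`,
and `P((Γ x)ᶜ) ≤ M x` for an integrable `M ≥ 0` on `[0,∞)`, then
`E ξ ≤ E α + β ∫_0^∞ M`. -/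
theorem stmt0 {Ω : Type*} [MeasurableSpace Ω] (P : Measure Ω) [IsProbabilityMeasure P]
    (ξ α : Ω → ℝ) (hξm : Measurable ξ) (hαm : Measurable α)
    (hξ : ∀ ω, 0 ≤ ξ ω) (hα : ∀ ω, 0 ≤ α ω)
    (β : ℝ) (hβ : 0 < β) (Γ : ℝ → Set Ω)
    (hΓ : ∀ x ≥ (0:ℝ), P ({ω | ξ ω > α ω + β * x} ∩ Γ x) = 0)
    (M : ℝ → ℝ) (hM0 : ∀ x ≥ (0:ℝ), 0 ≤ M x)
    (hMint : IntegrableOn M (Set.Ici 0))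
    (hMdom : ∀ x ≥ (0:ℝ), (P ((Γ x)ᶜ)).toReal ≤ M x) :
    ∫⁻ ω, ENNReal.ofReal (ξ ω) ∂P ≤
      ∫⁻ ω, ENNReal.ofReal (α ω) ∂P +
        ENNReal.ofReal (β * ∫ x in Set.Ici (0:ℝ), M x) :=
  stmt0_general P ξ α hξm hαm β hβ Γ hΓ M hMint hMdom
end

section
/- Let λ* > 0 and let z* be the unique root in (1, ∞) of the equation ln z = z − 2. For μ ∈ (0, 1/(2λ*)) set c(μ) = −(1/2) ln(1 − 2λ*μ). Then for every μ ∈ (0, 1/(2λ*)) and every ρ ∈ ℝ with ρ ≥ 4(c(μ)+1)/μ one has ρ + 4c(μ)/μ ≥ 8λ* z*; moreover, for μ* = (z*−1)/(2λ* z*) and ρ* = 4λ* z*²/(z*−1) one has ρ* = 4(c(μ*)+1)/μ* and ρ* + 4c(μ*)/μ* = 8λ* z*. -/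
/-!
Write `t = 1 - 2λ*μ ∈ (0, 1)`, so that `2λ*μ = 1 - t` and `2c(μ) = -ln t`. Using the constraint on `ρ`,
the claim reduces to `z*(1 - t) ≤ 1 - ln t`, which is the tangent-line bound `ln(z* t) ≤ z* t - 1`
rewritten with `ln z* = z* - 2`. Equality holds exactly at `t = 1/z*`, which is `μ = μ*`.
-/

open Real

lemma mul_one_sub_le_one_sub_log {w t : ℝ} (hw : 0 < w) (hlog : log w = w - 2) (ht : 0 < t) :
    w * (1 - t) ≤ 1 - log t := by
  have htangent := log_le_sub_one_of_pos (mul_pos hw ht)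
  rw [log_mul hw.ne' ht.ne', hlog] at htangent
  linarith

lemma log_one_sub_mul_div_eq_two_sub {lam w : ℝ} (hlam : lam ≠ 0) (hw : w ≠ 0)
    (hlog : log w = w - 2) :
    log (1 - 2 * lam * ((w - 1) / (2 * lam * w))) = 2 - w := by
  have ht : 1 - 2 * lam * ((w - 1) / (2 * lam * w)) = w⁻¹ := by
    field_simp
    ring
  rw [ht, log_inv, hlog]
  ring

/-- Optimality of the penalty coefficient: with
`c(μ) = −(1/2) ln(1 − 2λ*μ)`, for every `μ ∈ (0, 1/(2λ*))` and every
`ρ ≥ 4(c(μ)+1)/μ` one has `ρ + 4c(μ)/μ ≥ 8λ* z*`, and equality (with the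
constraint active) holds at `μ* = (z*−1)/(2λ* z*)`, `ρ* = 4λ* z*²/(z*−1)`,
where `z*` is the unique root in `(1,∞)` of `ln z = z − 2`. -/
theorem stmt6 (lamStar : ℝ) (hlam : 0 < lamStar)
    (zStar : ℝ) (hz1 : 1 < zStar) (hz : Real.log zStar = zStar - 2)
    (c : ℝ → ℝ) (hc : ∀ μ, c μ = -(1 / 2) * Real.log (1 - 2 * lamStar * μ)) :
    (∀ μ : ℝ, 0 < μ → μ < 1 / (2 * lamStar) →
      ∀ ρ : ℝ, 4 * (c μ + 1) / μ ≤ ρ →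
        8 * lamStar * zStar ≤ ρ + 4 * c μ / μ) ∧
    (4 * lamStar * zStar ^ 2 / (zStar - 1)
        = 4 * (c ((zStar - 1) / (2 * lamStar * zStar)) + 1) / ((zStar - 1) / (2 * lamStar * zStar)) ∧
      4 * lamStar * zStar ^ 2 / (zStar - 1)
          + 4 * c ((zStar - 1) / (2 * lamStar * zStar)) / ((zStar - 1) / (2 * lamStar * zStar))
        = 8 * lamStar * zStar) := by
  refine ⟨fun μ hμ hμlt ρ hρ => ?_, ?_⟩
  · have ht : 0 < 1 - 2 * lamStar * μ := by
      rw [lt_div_iff₀ (by positivity)] at hμlt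
      linarith
    have hbound := mul_one_sub_le_one_sub_log (by linarith) hz ht
    have hsum : 4 * (c μ + 1) / μ + 4 * c μ / μ = (4 - 4 * log (1 - 2 * lamStar * μ)) / μ := by
      rw [hc]
      field_simp
      ring
    have hdiv : 8 * lamStar * zStar ≤ (4 - 4 * log (1 - 2 * lamStar * μ)) / μ := by
      rw [le_div_iff₀ hμ]
      linarith
    linarith
  · have hcμ : c ((zStar - 1) / (2 * lamStar * zStar)) = (zStar - 2) / 2 := by
      rw [hc, log_one_sub_mul_div_eq_two_sub hlam.ne' (by positivity) hz]
      ring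
    have hz1' : zStar - 1 ≠ 0 := by linarith
    rw [hcμ]
    constructor <;> field_simp <;> ring
end

section
/- Let d > 2 be an integer, n > 0, and define v : ℝ^d \ {0} → ℝ^d by v(u) = −((d−2)/(n‖u‖²)) u. Then for every u ≠ 0, (2/n) div v(u) + ‖v(u)‖² = −(d−2)²/(n² ‖u‖²). In particular this quantity is strictly negative for all u ≠ 0. -/
/-!
The field `v` is `c • u / ‖u‖²` with `c = -(d - 2) / n`. Each partial derivative
`∂ⱼ (uⱼ / ‖u‖²) = 1 / ‖u‖² - 2 uⱼ² / ‖u‖⁴` sums to `div (u / ‖u‖²) = (d - 2) / ‖u‖²`, so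
`(2 / n) div v + ‖v‖² = (2 c (d - 2) / n + c²) / ‖u‖²`, and `2 (d - 2) / n = -2c` turns this
into `-c² / ‖u‖²`.
-/

open Finset

noncomputable section

variable {ι : Type*} [Fintype ι]

def divergence [DecidableEq ι] (v : (ι → ℝ) → ι → ℝ) (u : ι → ℝ) : ℝ :=
  ∑ j, fderiv ℝ (fun w => v w j) u (Pi.single j 1)

theorem divergence_congr_of_eventuallyEq [DecidableEq ι] {v v' : (ι → ℝ) → ι → ℝ} {u : ι → ℝ}
    (h : v =ᶠ[nhds u] v') : divergence v u = divergence v' u := by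
  unfold divergence
  refine sum_congr rfl fun j _ => ?_
  rw [Filter.EventuallyEq.fderiv_eq (h.mono fun w hw => congrFun hw j)]

def radialField (c : ℝ) (w : ι → ℝ) : ι → ℝ := (c * (∑ i, w i ^ 2)⁻¹) • w

theorem hasFDerivAt_sum_sq (u : ι → ℝ) :
    HasFDerivAt (fun w : ι → ℝ => ∑ i, w i ^ 2)
      (∑ i, (2 * u i) • ContinuousLinearMap.proj (R := ℝ) (φ := fun _ : ι => ℝ) i) u := by
  refine HasFDerivAt.fun_sum fun i _ => ?_
  have hsq : HasDerivAt (fun t : ℝ => t ^ 2) (2 * u i) (u i) := by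
    simpa using hasDerivAt_pow 2 (u i)
  exact hsq.comp_hasFDerivAt (f := fun w : ι → ℝ => w i) u (hasFDerivAt_apply i u)

theorem fderiv_radialField_apply_single [DecidableEq ι] (c : ℝ) {u : ι → ℝ}
    (hu : ∑ i, u i ^ 2 ≠ 0) (j : ι) :
    fderiv ℝ (fun w => radialField c w j) u (Pi.single j 1)
      = c * (∑ i, u i ^ 2)⁻¹ - 2 * c * u j ^ 2 * ((∑ i, u i ^ 2) ^ 2)⁻¹ := by
  have h : HasFDerivAt (fun w => c * (∑ i, w i ^ 2)⁻¹ * w j) _ u :=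
    (((hasDerivAt_inv hu).comp_hasFDerivAt u (hasFDerivAt_sum_sq u)).const_mul c).mul
      (hasFDerivAt_apply j u)
  simp only [radialField, Pi.smul_apply, smul_eq_mul]
  rw [h.fderiv]
  simp only [Function.comp_apply, neg_smul, smul_neg, add_apply,
    smul_apply, ContinuousLinearMap.proj_apply, Pi.single_eq_same, smul_eq_mul,
    mul_one, neg_apply, _root_.sum_apply, Pi.single_apply,
    mul_ite, mul_zero, sum_ite_eq', mem_univ, ↓reduceIte]
  ring

theorem divergence_radialField [DecidableEq ι] (c : ℝ) {u : ι → ℝ} (hu : ∑ i, u i ^ 2 ≠ 0) :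
    divergence (radialField c) u = c * (Fintype.card ι - 2) / ∑ i, u i ^ 2 := by
  simp only [divergence, fderiv_radialField_apply_single c hu, sum_sub_distrib, sum_const,
    card_univ, nsmul_eq_mul, ← sum_mul, ← mul_sum]
  field_simp

theorem sum_sq_radialField (c : ℝ) {u : ι → ℝ} (hu : ∑ i, u i ^ 2 ≠ 0) :
    ∑ j, radialField c u j ^ 2 = c ^ 2 / ∑ i, u i ^ 2 := by
  simp only [radialField, Pi.smul_apply, smul_eq_mul, mul_pow, ← mul_sum]
  field_simp

end

/-- James–Stein type shrinkage: for `d > 2` and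
`v(u) = −((d−2)/(n‖u‖²)) u` on `ℝ^d \ {0}`, one has
`(2/n) div v(u) + ‖v(u)‖² = −(d−2)²/(n²‖u‖²) < 0` for every `u ≠ 0`. -/
theorem stmt8 (d : ℕ) (hd : 2 < d) (n : ℝ) (hn : 0 < n)
    (v : (Fin d → ℝ) → (Fin d → ℝ))
    (hv : ∀ u : Fin d → ℝ, u ≠ 0 →
      v u = -(((d : ℝ) - 2) / (n * ∑ i, u i ^ 2)) • u) :
    ∀ u : Fin d → ℝ, u ≠ 0 →
      ((2 / n) * (∑ j, fderiv ℝ (fun w => v w j) u (Pi.single j 1)) + (∑ j, v u j ^ 2)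
          = -((d : ℝ) - 2) ^ 2 / (n ^ 2 * ∑ i, u i ^ 2)) ∧
      ((2 / n) * (∑ j, fderiv ℝ (fun w => v w j) u (Pi.single j 1)) + (∑ j, v u j ^ 2) < 0) := by
  intro u hu
  have hS : 0 < ∑ i, u i ^ 2 := by
    obtain ⟨i, hi⟩ := Function.ne_iff.mp hu
    exact sum_pos' (fun _ _ => sq_nonneg _) ⟨i, mem_univ _, sq_pos_of_ne_zero hi⟩
  have hv_radial : v =ᶠ[nhds u] radialField (-((d - 2) / n)) := by
    filter_upwards [eventually_ne_nhds hu] with w hw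
    rw [hv w hw, radialField]
    congr 1
    ring
  have hdiv : divergence v u = -((d - 2) / n) * (d - 2) / ∑ i, u i ^ 2 := by
    rw [divergence_congr_of_eventuallyEq hv_radial, divergence_radialField _ hS.ne',
      Fintype.card_fin]
  have hsq : ∑ j, v u j ^ 2 = (-((d - 2) / n)) ^ 2 / ∑ i, u i ^ 2 := by
    rw [hv_radial.eq_of_nhds, sum_sq_radialField _ hS.ne']
  have hid : (2 / n) * (∑ j, fderiv ℝ (fun w => v w j) u (Pi.single j 1)) + (∑ j, v u j ^ 2)
      = -((d : ℝ) - 2) ^ 2 / (n ^ 2 * ∑ i, u i ^ 2) := by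
    change (2 / n) * divergence v u + _ = _
    rw [hdiv, hsq]
    field_simp
    ring
  have hd' : (0 : ℝ) < d - 2 := sub_pos.2 (by exact_mod_cast hd)
  exact ⟨hid, hid ▸ div_neg_of_neg_of_pos (neg_neg_of_pos (by positivity)) (by positivity)⟩
end

section
/- Let k ≥ 0 be an integer and let V : ℝ → ℝ be (k+1)-times continuously differentiable with V(u) = 0 for |u| ≥ 1. Set V* = sup_{|a|≤1} |V^{(k+1)}(a)|. Let m ≥ 1 be an integer, h = 1/(2m), and a_j = (2j−1)/(2m) for 1 ≤ j ≤ m. Then for every α ∈ [0,1] and all s, t ∈ [0,1], Σ_{j=1}^m |V^{(k)}((t−a_j)/h) − V^{(k)}((s−a_j)/h)| ≤ 2^{2−α} V* (|t−s|/h)^α. -/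
/-!
`W = V^{(k)}` vanishes outside `(-1, 1)` and is `V*`-Lipschitz by the mean value theorem; since
it vanishes at `±1`, also `|W| ≤ V*`, so each increment is at most `V* · min 2 r` with
`r = |t - s| / h`, and `min 2 r ≤ 2^{1-α} r^α`. The supports `(a_j - h, a_j + h)` of the rescaled
kernels are disjoint, so at most one of them contains `t` and at most one contains `s`: only two
terms of the sum are nonzero.
-/

open Set Finset Metric Filter Topology

theorem iteratedDeriv_eq_zero_of_one_le_abs {n : WithTop ℕ∞} {V : ℝ → ℝ} (hV : ContDiff ℝ n V)
    (hV0 : ∀ u : ℝ, 1 ≤ |u| → V u = 0) {k : ℕ} (hk : k ≤ n) {u : ℝ} (hu : 1 ≤ |u|) :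
    iteratedDeriv k V u = 0 := by
  have hout : EqOn (iteratedDeriv k V) 0 (closedBall 0 1)ᶜ := fun y hy => by
    have hV0y : V =ᶠ[𝓝 y] 0 := by
      filter_upwards [isClosed_closedBall.isOpen_compl.mem_nhds hy] with z hz
      exact hV0 z (le_of_lt (by simpa using hz))
    simp [hV0y.iteratedDeriv_eq k]
  have hcl := hout.closure (hV.continuous_iteratedDeriv k hk) continuous_zero
  rw [closure_compl, interior_closedBall _ one_ne_zero] at hcl
  exact hcl (by simpa using hu)

theorem abs_le_sSup_abs_image_Icc {f : ℝ → ℝ} (hf : Continuous f)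
    (hf0 : ∀ x : ℝ, 1 ≤ |x| → f x = 0) (x : ℝ) :
    |f x| ≤ sSup ((fun a => |f a|) '' Icc (-1 : ℝ) 1) := by
  have hbdd : BddAbove ((fun a => |f a|) '' Icc (-1 : ℝ) 1) :=
    (isCompact_Icc.image hf.abs).bddAbove
  rcases le_or_gt |x| 1 with hx | hx
  · exact le_csSup hbdd ⟨x, abs_le.1 hx, rfl⟩
  · rw [hf0 x hx.le, ← hf0 1 (by simp)]
    exact le_csSup hbdd ⟨1, by simp, rfl⟩

theorem abs_sub_le_of_abs_deriv_le {f : ℝ → ℝ} {C : ℝ} (hf : Differentiable ℝ f)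
    (hC : ∀ x, |deriv f x| ≤ C) (x y : ℝ) : |f x - f y| ≤ C * |x - y| :=
  convex_univ.norm_image_sub_le_of_norm_deriv_le (fun z _ => hf z) (fun z _ => hC z)
    (mem_univ y) (mem_univ x)

section VanishingLipschitz

variable {f : ℝ → ℝ} {C : ℝ} (hf0 : ∀ x : ℝ, 1 ≤ |x| → f x = 0)
  (hL : ∀ x y, |f x - f y| ≤ C * |x - y|)
include hf0 hL

theorem abs_le_of_lipschitz_of_eq_zero (x : ℝ) : |f x| ≤ C := by
  have hC : 0 ≤ C := by simpa using (abs_nonneg _).trans (hL 0 1)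
  rcases le_or_gt 1 |x| with hx | hx
  · simpa [hf0 x hx] using hC
  obtain ⟨e, he, hxe⟩ : ∃ e : ℝ, 1 ≤ |e| ∧ |x - e| ≤ 1 := by
    rcases le_total 0 x with h0 | h0
    · exact ⟨1, by simp, by rw [abs_le]; constructor <;> linarith [abs_lt.1 hx]⟩
    · exact ⟨-1, by simp, by rw [abs_le]; constructor <;> linarith [abs_lt.1 hx]⟩
  calc |f x| = |f x - f e| := by rw [hf0 e he, sub_zero]
    _ ≤ C * |x - e| := hL x e
    _ ≤ C * 1 := by gcongr
    _ = C := mul_one C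

theorem abs_sub_le_mul_min_two (x y : ℝ) : |f x - f y| ≤ C * min 2 |x - y| := by
  have hC : 0 ≤ C := by simpa using (abs_nonneg _).trans (hL 0 1)
  rw [mul_min_of_nonneg _ _ hC]
  refine le_min ?_ (hL x y)
  calc |f x - f y| ≤ |f x| + |f y| := abs_sub _ _
    _ ≤ C + C := add_le_add (abs_le_of_lipschitz_of_eq_zero hf0 hL x)
        (abs_le_of_lipschitz_of_eq_zero hf0 hL y)
    _ = C * 2 := by ring

end VanishingLipschitz

theorem min_le_rpow_mul_rpow {a b α : ℝ} (ha : 0 ≤ a) (hb : 0 ≤ b) (hα : α ∈ Icc (0 : ℝ) 1) :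
    min a b ≤ a ^ (1 - α) * b ^ α := by
  have hmin : 0 ≤ min a b := le_min ha hb
  calc min a b = min a b ^ (1 - α) * min a b ^ α := by
        rw [← Real.rpow_add' hmin (by norm_num), sub_add_cancel, Real.rpow_one]
    _ ≤ a ^ (1 - α) * b ^ α := by
        gcongr
        · linarith [hα.2]
        · exact min_le_left a b
        · exact hα.1
        · exact min_le_right a b

theorem card_filter_abs_sub_lt_le_one {ι : Type*} {I : Finset ι} {a : ι → ℝ} {h : ℝ}
    (hsep : ∀ i ∈ I, ∀ j ∈ I, |a i - a j| < 2 * h → i = j) (u : ℝ) :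
    #{j ∈ I | |u - a j| < h} ≤ 1 := by
  refine Finset.card_le_one.2 fun i hi j hj => ?_
  rw [Finset.mem_filter] at hi hj
  refine hsep i hi.1 j hj.1 ?_
  calc |a i - a j| ≤ |a i - u| + |u - a j| := abs_sub_le _ _ _
    _ < 2 * h := by linarith [hi.2, hj.2, abs_sub_comm (a i) u]

theorem sum_le_two_mul_of_separated {ι : Type*} [DecidableEq ι] {I : Finset ι} {a : ι → ℝ}
    {h : ℝ} (hsep : ∀ i ∈ I, ∀ j ∈ I, |a i - a j| < 2 * h → i = j) (s t : ℝ) {F : ι → ℝ}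
    {B : ℝ} (hB : 0 ≤ B) (hFB : ∀ j ∈ I, F j ≤ B)
    (hF0 : ∀ j ∈ I, h ≤ |t - a j| → h ≤ |s - a j| → F j = 0) :
    ∑ j ∈ I, F j ≤ 2 * B := by
  set N := {j ∈ I | |t - a j| < h} ∪ {j ∈ I | |s - a j| < h}
  have hN : N ⊆ I := union_subset (filter_subset _ _) (filter_subset _ _)
  have hcard : #N ≤ 2 := (Finset.card_union_le _ _).trans
    (add_le_add (card_filter_abs_sub_lt_le_one hsep t) (card_filter_abs_sub_lt_le_one hsep s))
  calc ∑ j ∈ I, F j = ∑ j ∈ N, F j := by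
        refine (sum_subset hN fun j hj hjN => hF0 j hj ?_ ?_).symm <;>
        · by_contra hlt
          exact hjN (by simp [N, hj, not_le.1 hlt])
    _ ≤ #N • B := sum_le_card_nsmul _ _ _ fun j hj => hFB j (hN hj)
    _ ≤ 2 • B := nsmul_le_nsmul_left hB hcard
    _ = 2 * B := two_nsmul B |>.trans (two_mul B).symm

theorem eq_of_abs_sub_midpoints_lt {m : ℕ} (hm : 0 < m) {i j : ℕ}
    (hij : |(2 * (i : ℝ) - 1) / (2 * m) - (2 * (j : ℝ) - 1) / (2 * m)| < 2 * (1 / (2 * m))) :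
    i = j := by
  have hm' : (0 : ℝ) < m := by exact_mod_cast hm
  have hdiff : (2 * (i : ℝ) - 1) / (2 * m) - (2 * (j : ℝ) - 1) / (2 * m) = ((i : ℤ) - j : ℤ) / m := by
    push_cast; field_simp; ring
  rw [hdiff, abs_div, abs_of_pos hm', show 2 * (1 / (2 * (m : ℝ))) = 1 / m by field_simp,
    div_lt_div_iff_of_pos_right hm', ← Int.cast_abs, ← Int.cast_one, Int.cast_lt,
    Int.abs_lt_one_iff] at hij
  omega

theorem stmt9_general (k : ℕ) (V : ℝ → ℝ) (hV : ContDiff ℝ (k + 1) V)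
    (hV0 : ∀ u : ℝ, 1 ≤ |u| → V u = 0)
    (Vstar : ℝ)
    (hVstar : Vstar = sSup ((fun a => |iteratedDeriv (k + 1) V a|) '' Set.Icc (-1 : ℝ) 1))
    (m : ℕ) (hm : 1 ≤ m) (h : ℝ) (hh : h = 1 / (2 * m))
    (a : ℕ → ℝ) (ha : ∀ j : ℕ, a j = (2 * (j : ℝ) - 1) / (2 * m))
    (α : ℝ) (hα : α ∈ Set.Icc (0 : ℝ) 1)
    (s t : ℝ) :
    ∑ j ∈ Finset.Icc 1 m,
        |iteratedDeriv k V ((t - a j) / h) - iteratedDeriv k V ((s - a j) / h)| ≤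
      (2 : ℝ) ^ (2 - α) * Vstar * (|t - s| / h) ^ α := by
  set W := iteratedDeriv k V
  have hW0 : ∀ u : ℝ, 1 ≤ |u| → W u = 0 := fun u =>
    iteratedDeriv_eq_zero_of_one_le_abs hV hV0 (by norm_cast; omega)
  have hV' : ∀ x, |iteratedDeriv (k + 1) V x| ≤ Vstar := hVstar ▸ abs_le_sSup_abs_image_Icc
    (hV.continuous_iteratedDeriv _ le_rfl) fun u => iteratedDeriv_eq_zero_of_one_le_abs hV hV0 le_rfl
  have hLip : ∀ x y, |W x - W y| ≤ Vstar * |x - y| := abs_sub_le_of_abs_deriv_le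
    (hV.differentiable_iteratedDeriv k (by norm_cast; omega)) fun x => iteratedDeriv_succ (f := V) ▸ hV' x
  have hVstar0 : 0 ≤ Vstar := (abs_nonneg _).trans (hV' 0)
  have hpos : 0 < h := by rw [hh]; positivity
  have hsep : ∀ i ∈ Finset.Icc 1 m, ∀ j ∈ Finset.Icc 1 m, |a i - a j| < 2 * h → i = j :=
    fun i _ j _ hij => eq_of_abs_sub_midpoints_lt hm (by rwa [ha i, ha j, hh] at hij)
  have hW0' : ∀ u : ℝ, h ≤ |u| → W (u / h) = 0 := fun u hu =>
    hW0 _ (by rwa [abs_div, abs_of_pos hpos, le_div_iff₀ hpos, one_mul])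
  have hr : ∀ j, |(t - a j) / h - (s - a j) / h| = |t - s| / h := fun j => by
    rw [← sub_div, sub_sub_sub_cancel_right, abs_div, abs_of_pos hpos]
  calc _ ≤ 2 * (Vstar * min 2 (|t - s| / h)) := by
        refine sum_le_two_mul_of_separated hsep s t (by positivity)
          (fun j _ => hr j ▸ abs_sub_le_mul_min_two hW0 hLip _ _) fun j _ ht hs => ?_
        rw [hW0' _ ht, hW0' _ hs, sub_self, abs_zero]
    _ ≤ 2 * (Vstar * (2 ^ (1 - α) * (|t - s| / h) ^ α)) := by
        gcongr
        exact min_le_rpow_mul_rpow zero_le_two (by positivity) hα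
    _ = 2 ^ (2 - α) * Vstar * (|t - s| / h) ^ α := by
        rw [show (2 : ℝ) - α = 1 + (1 - α) by ring, Real.rpow_add two_pos, Real.rpow_one]
        ring

/-- Hölder-type bound for the sum of increments of the `k`-th derivative of
the scaled kernels `V((·−a_j)/h)`: for `V ∈ C^{k+1}` vanishing outside `[−1,1]`,
`h = 1/2m`, `a_j = (2j−1)/2m`, and any `α ∈ [0,1]`, `s, t ∈ [0,1]`,
`Σ_{j=1}^m |V^{(k)}((t−a_j)/h) − V^{(k)}((s−a_j)/h)| ≤ 2^{2−α} V* (|t−s|/h)^α`. -/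
theorem stmt9 (k : ℕ) (V : ℝ → ℝ) (hV : ContDiff ℝ (k + 1) V)
    (hV0 : ∀ u : ℝ, 1 ≤ |u| → V u = 0)
    (Vstar : ℝ)
    (hVstar : Vstar = sSup ((fun a => |iteratedDeriv (k + 1) V a|) '' Set.Icc (-1 : ℝ) 1))
    (m : ℕ) (hm : 1 ≤ m) (h : ℝ) (hh : h = 1 / (2 * m))
    (a : ℕ → ℝ) (ha : ∀ j : ℕ, a j = (2 * (j : ℝ) - 1) / (2 * m))
    (α : ℝ) (hα : α ∈ Set.Icc (0 : ℝ) 1)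
    (s t : ℝ) (hs : s ∈ Set.Icc (0 : ℝ) 1) (ht : t ∈ Set.Icc (0 : ℝ) 1) :
    ∑ j ∈ Finset.Icc 1 m,
        |iteratedDeriv k V ((t - a j) / h) - iteratedDeriv k V ((s - a j) / h)| ≤
      (2 : ℝ) ^ (2 - α) * Vstar * (|t - s| / h) ^ α :=
  stmt9_general k V hV hV0 Vstar hVstar m hm h hh a ha α hα s t
end

section
/- Let (s_i)_{i≥1} be a sequence of real numbers, β > 1 and r > 0, and assume Σ_{i≥n} s_i² ≤ r² n^{−2β} for every integer n ≥ 1. Then for every integer j ≥ 0, Σ_{i≥j+1} i² s_i² ≤ r² (j+1)^{−2(β−1)} · β/(β−1). -/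
/-!
Write `T n = ∑_{i ≥ n} s_i²`, so that `s_n² = T n - T (n+1)` and `T n ≤ r² n^{-2β}`. With
`C = r² / (β - 1)`, the potential `g n = n² T n + C n^{2-2β}` satisfies `n² s_n² ≤ g n - g (n+1)`:
expanding `n² (T n - T (n+1))` leaves the error `(2n+1) T (n+1) ≤ 2 r² (n+1)^{1-2β}`, which the mean
value theorem shows is paid for by the drop `C (n^{2-2β} - (n+1)^{2-2β})`. Telescoping bounds the
weighted tail from `m` by `g m ≤ r² m^{2-2β} (1 + 1/(β-1))`.
-/

open Finset

lemma rpow_sub_rpow_add_one_ge {q a : ℝ} (hq : q ≤ 0) (ha : 0 < a) :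
    -q * (a + 1) ^ (q - 1) ≤ a ^ q - (a + 1) ^ q := by
  have hcont : ContinuousOn (fun x : ℝ => x ^ q) (Set.Icc a (a + 1)) := fun x hx =>
    (Real.continuousAt_rpow_const x q (Or.inl (ha.trans_le hx.1).ne')).continuousWithinAt
  have hderiv : ∀ x ∈ Set.Ioo a (a + 1), HasDerivAt (fun x : ℝ => x ^ q) (q * x ^ (q - 1)) x :=
    fun x hx => Real.hasDerivAt_rpow_const (Or.inl (ha.trans hx.1).ne')
  obtain ⟨c, hc, hslope⟩ := exists_hasDerivAt_eq_slope _ _ (lt_add_one a) hcont hderiv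
  rw [add_sub_cancel_left, div_one] at hslope
  have hmono : (a + 1) ^ (q - 1) ≤ c ^ (q - 1) :=
    Real.rpow_le_rpow_of_nonpos (ha.trans hc.1) hc.2.le (by linarith)
  nlinarith

lemma summable_and_tsum_le_of_le_sub_succ {f g : ℕ → ℝ} (hf : ∀ n, 0 ≤ f n)
    (hg : ∀ n, 0 ≤ g n) (h : ∀ n, f n ≤ g n - g (n + 1)) :
    Summable f ∧ ∑' n, f n ≤ g 0 := by
  have hpartial : ∀ N, ∑ n ∈ range N, f n ≤ g 0 := fun N =>
    calc ∑ n ∈ range N, f n ≤ ∑ n ∈ range N, (g n - g (n + 1)) := sum_le_sum fun n _ => h n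
      _ = g 0 - g N := sum_range_sub' g N
      _ ≤ g 0 := sub_le_self _ (hg N)
  exact ⟨summable_of_sum_range_le hf hpartial, Real.tsum_le_of_sum_range_le hf hpartial⟩

section TailPotential

variable {T : ℕ → ℝ} {β R : ℝ}

noncomputable def tailPotential (T : ℕ → ℝ) (β R : ℝ) (n : ℕ) : ℝ :=
  (n : ℝ) ^ 2 * T n + R / (β - 1) * (n : ℝ) ^ (2 - 2 * β)

lemma tailPotential_nonneg (hβ : 1 < β) (hR : 0 ≤ R) (hT : ∀ n, 0 ≤ T n) (n : ℕ) :
    0 ≤ tailPotential T β R n :=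
  add_nonneg (mul_nonneg (sq_nonneg _) (hT n))
    (mul_nonneg (div_nonneg hR (by linarith)) (Real.rpow_nonneg n.cast_nonneg _))

lemma tailPotential_le (hβ : 1 < β)
    (htail : ∀ n : ℕ, 1 ≤ n → T n ≤ R * (n : ℝ) ^ (-(2 * β))) {m : ℕ} (hm : 1 ≤ m) :
    tailPotential T β R m ≤ R * (m : ℝ) ^ (2 - 2 * β) * (β / (β - 1)) := by
  have hm0 : (0 : ℝ) < m := by exact_mod_cast hm
  have hpow : (m : ℝ) ^ 2 * (m : ℝ) ^ (-(2 * β)) = (m : ℝ) ^ (2 - 2 * β) := by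
    rw [sub_eq_add_neg, Real.rpow_add hm0, Real.rpow_two]
  have hsq : (m : ℝ) ^ 2 * T m ≤ R * (m : ℝ) ^ (2 - 2 * β) := by
    rw [← hpow, mul_left_comm]
    exact mul_le_mul_of_nonneg_left (htail m hm) (sq_nonneg _)
  have hβ1 : β - 1 ≠ 0 := by linarith
  calc tailPotential T β R m ≤ R * (m : ℝ) ^ (2 - 2 * β) + R / (β - 1) * (m : ℝ) ^ (2 - 2 * β) :=
        add_le_add_left hsq _
    _ = R * (m : ℝ) ^ (2 - 2 * β) * (β / (β - 1)) := by field_simp; ring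

lemma sq_mul_sub_succ_le_tailPotential_sub (hβ : 1 < β) (hR : 0 ≤ R) (hT : ∀ n, 0 ≤ T n)
    (htail : ∀ n : ℕ, 1 ≤ n → T n ≤ R * (n : ℝ) ^ (-(2 * β))) {n : ℕ} (hn : 1 ≤ n) :
    (n : ℝ) ^ 2 * (T n - T (n + 1)) ≤ tailPotential T β R n - tailPotential T β R (n + 1) := by
  have hn0 : (0 : ℝ) < n := by exact_mod_cast hn
  have hn1 : (0 : ℝ) < n + 1 := by linarith
  have hTsucc : T (n + 1) ≤ R * ((n : ℝ) + 1) ^ (-(2 * β)) := by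
    exact_mod_cast htail (n + 1) (by omega)
  have herror : (2 * (n : ℝ) + 1) * T (n + 1) ≤ 2 * R * ((n : ℝ) + 1) ^ (1 - 2 * β) :=
    calc (2 * (n : ℝ) + 1) * T (n + 1) ≤ (2 * ((n : ℝ) + 1)) * (R * ((n : ℝ) + 1) ^ (-(2 * β))) :=
          mul_le_mul (by linarith) hTsucc (hT _) (by positivity)
      _ = 2 * R * ((n : ℝ) + 1) ^ (1 - 2 * β) := by
          rw [sub_eq_add_neg, Real.rpow_add hn1, Real.rpow_one]; ring
  have hdrop : 2 * R * ((n : ℝ) + 1) ^ (1 - 2 * β) ≤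
      R / (β - 1) * ((n : ℝ) ^ (2 - 2 * β) - ((n : ℝ) + 1) ^ (2 - 2 * β)) := by
    have hmvt := rpow_sub_rpow_add_one_ge (q := 2 - 2 * β) (by linarith) hn0
    rw [show (2 - 2 * β - 1) = 1 - 2 * β by ring] at hmvt
    have hβ1 : β - 1 ≠ 0 := by linarith
    calc 2 * R * ((n : ℝ) + 1) ^ (1 - 2 * β)
        = R / (β - 1) * (-(2 - 2 * β) * ((n : ℝ) + 1) ^ (1 - 2 * β)) := by field_simp; ring
      _ ≤ _ := mul_le_mul_of_nonneg_left hmvt (div_nonneg hR (by linarith))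
  simp only [tailPotential, Nat.cast_add, Nat.cast_one]
  nlinarith

end TailPotential

lemma summable_and_tsum_weighted_tail_le {a : ℕ → ℝ} {β R : ℝ} (hβ : 1 < β) (hR : 0 ≤ R)
    (ha : ∀ n, 0 ≤ a n) (hsum : Summable a)
    (htail : ∀ n : ℕ, 1 ≤ n → ∑' i, a (n + i) ≤ R * (n : ℝ) ^ (-(2 * β))) {m : ℕ} (hm : 1 ≤ m) :
    Summable (fun i => ((m + i : ℕ) : ℝ) ^ 2 * a (m + i)) ∧
      ∑' i, ((m + i : ℕ) : ℝ) ^ 2 * a (m + i) ≤ R * (m : ℝ) ^ (2 - 2 * β) * (β / (β - 1)) := by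
  set T : ℕ → ℝ := fun n => ∑' i, a (n + i)
  have hT : ∀ n, 0 ≤ T n := fun n => tsum_nonneg fun i => ha _
  have hdiff : ∀ n, a n = T n - T (n + 1) := fun n => by
    have := ((summable_nat_add_iff n).2 hsum).tsum_eq_zero_add
    simp only [add_comm _ n, add_zero, ← add_assoc] at this
    simp only [T, add_right_comm n 1]
    linarith
  have hstep : ∀ i, ((m + i : ℕ) : ℝ) ^ 2 * a (m + i) ≤
      tailPotential T β R (m + i) - tailPotential T β R (m + (i + 1)) := fun i => by
    rw [hdiff]
    exact sq_mul_sub_succ_le_tailPotential_sub hβ hR hT htail (by omega)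
  obtain ⟨hsummable, hle⟩ := summable_and_tsum_le_of_le_sub_succ
    (fun i => mul_nonneg (sq_nonneg _) (ha _)) (fun i => tailPotential_nonneg hβ hR hT _) hstep
  exact ⟨hsummable, hle.trans (tailPotential_le hβ htail hm)⟩

theorem stmt11_general (s : ℕ → ℝ) (β r : ℝ) (hβ : 1 < β)
    (hsum : Summable (fun i => s i ^ 2))
    (htail : ∀ n : ℕ, 1 ≤ n → ∑' i : ℕ, s (n + i) ^ 2 ≤ r ^ 2 * (n : ℝ) ^ (-(2 * β))) :
    Summable (fun i : ℕ => (i : ℝ) ^ 2 * s i ^ 2) ∧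
      ∀ j : ℕ, ∑' i : ℕ, ((j + 1 + i : ℕ) : ℝ) ^ 2 * s (j + 1 + i) ^ 2 ≤
        r ^ 2 * ((j : ℝ) + 1) ^ (-(2 * (β - 1))) * (β / (β - 1)) := by
  have hweighted := fun m (hm : 1 ≤ m) =>
    summable_and_tsum_weighted_tail_le hβ (sq_nonneg r) (fun n => sq_nonneg (s n)) hsum htail hm
  refine ⟨?_, fun j => ?_⟩
  · have := (hweighted 1 le_rfl).1
    simp only [add_comm 1] at this
    exact (summable_nat_add_iff 1).1 this
  · rw [show -(2 * (β - 1)) = 2 - 2 * β by ring]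
    exact_mod_cast (hweighted (j + 1) (by omega)).2

/-- Weighted tail bound: if `Σ_{i≥n} s_i² ≤ r² n^{−2β}` for all `n ≥ 1`
(with `β > 1`), then for every `j ≥ 0`,
`Σ_{i≥j+1} i² s_i² ≤ r² (j+1)^{−2(β−1)} β/(β−1)`. -/
theorem stmt11 (s : ℕ → ℝ) (β r : ℝ) (hβ : 1 < β) (hr : 0 < r)
    (hsum : Summable (fun i => s i ^ 2))
    (htail : ∀ n : ℕ, 1 ≤ n → ∑' i : ℕ, s (n + i) ^ 2 ≤ r ^ 2 * (n : ℝ) ^ (-(2 * β))) :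
    Summable (fun i : ℕ => (i : ℝ) ^ 2 * s i ^ 2) ∧
      ∀ j : ℕ, ∑' i : ℕ, ((j + 1 + i : ℕ) : ℝ) ^ 2 * s (j + 1 + i) ^ 2 ≤
        r ^ 2 * ((j : ℝ) + 1) ^ (-(2 * (β - 1))) * (β / (β - 1)) :=
  stmt11_general s β r hβ hsum htail
end

section
/- Let p ≥ 1 be an integer, let f : [0,1] → ℝ be continuously differentiable, and for 1 ≤ l ≤ p set h_l(f) = p ∫_{(l−1)/p}^{l/p} (f(t) − f(l/p)) dt. Then (1/p) Σ_{l=1}^p h_l(f)² ≤ p^{−2} ∫_0^1 f′(t)² dt. -/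
open intervalIntegral Set
open MeasureTheory (volume)

/-
Write `b = l/p` and `a = (l-1)/p`. For `t ∈ [a, b]`, `f t - f b = -∫_t^b f'`, so
Cauchy–Schwarz gives `(f t - f b)² ≤ (b - a) ∫_a^b f'²`. Cauchy–Schwarz once more, on
`∫_a^b (f - f b)`, yields
`h_l(f)² = p² (∫_a^b (f - f b))² ≤ p² (b - a)³ ∫_a^b f'² = p⁻¹ ∫_a^b f'²`, and summing
over the `p` subintervals gives the claim.
-/

theorem sq_intervalIntegral_le_mul_integral_sq {a b : ℝ} (hab : a ≤ b) {g : ℝ → ℝ}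
    (hg : IntervalIntegrable g volume a b)
    (hg2 : IntervalIntegrable (fun t => g t ^ 2) volume a b) :
    (∫ t in a..b, g t) ^ 2 ≤ (b - a) * ∫ t in a..b, g t ^ 2 := by
  rcases hab.eq_or_lt with rfl | hlt
  · simp
  have hba : 0 < b - a := sub_pos.mpr hlt
  set c := (∫ t in a..b, g t) / (b - a)
  -- expand `0 ≤ ∫ (g - c)²` with `c` the mean value of `g`
  have hvar : 0 ≤ ∫ t in a..b, (g t - c) ^ 2 := integral_nonneg hab fun t _ => sq_nonneg _
  have hexp : ∫ t in a..b, (g t - c) ^ 2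
      = (∫ t in a..b, g t ^ 2) - 2 * c * (∫ t in a..b, g t) + (b - a) * c ^ 2 := by
    simp_rw [fun t => show (g t - c) ^ 2 = g t ^ 2 - (2 * c) * g t + c ^ 2 by ring]
    rw [integral_add (hg2.sub (hg.const_mul _)) intervalIntegrable_const,
      integral_sub hg2 (hg.const_mul _), integral_const_mul, integral_const, smul_eq_mul]
  have hc : c * (b - a) = ∫ t in a..b, g t := div_mul_cancel₀ _ hba.ne'
  nlinarith

section Deviation

variable {f f' : ℝ → ℝ} {a b : ℝ}

theorem integral_eq_sub_of_hasDerivWithinAt_Icc (hab : a ≤ b)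
    (hf : ∀ t ∈ Icc a b, HasDerivWithinAt f (f' t) (Icc a b) t)
    (hf' : ContinuousOn f' (Icc a b)) :
    ∫ t in a..b, f' t = f b - f a :=
  integral_eq_sub_of_hasDerivAt_of_le hab (fun t ht => (hf t ht).continuousWithinAt)
    (fun t ht => (hf t (Ioo_subset_Icc_self ht)).hasDerivAt (Icc_mem_nhds ht.1 ht.2))
    (hf'.intervalIntegrable_of_Icc hab)

theorem sq_sub_right_le_of_hasDerivWithinAt_Icc
    (hf : ∀ t ∈ Icc a b, HasDerivWithinAt f (f' t) (Icc a b) t)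
    (hf' : ContinuousOn f' (Icc a b))
    {t : ℝ} (ht : t ∈ Icc a b) :
    (f t - f b) ^ 2 ≤ (b - a) * ∫ s in a..b, f' s ^ 2 := by
  have hsub : Icc t b ⊆ Icc a b := Icc_subset_Icc_left ht.1
  have hftc : ∫ s in t..b, f' s = f b - f t :=
    integral_eq_sub_of_hasDerivWithinAt_Icc ht.2 (fun s hs => (hf s (hsub hs)).mono hsub)
      (hf'.mono hsub)
  have hcs := sq_intervalIntegral_le_mul_integral_sq ht.2
    ((hf'.mono hsub).intervalIntegrable_of_Icc ht.2)
    (((hf'.mono hsub).pow 2).intervalIntegrable_of_Icc ht.2)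
  have hmono : ∫ s in t..b, f' s ^ 2 ≤ ∫ s in a..b, f' s ^ 2 :=
    integral_mono_interval ht.1 ht.2 le_rfl (Filter.Eventually.of_forall fun _ => sq_nonneg _)
      ((hf'.pow 2).intervalIntegrable_of_Icc (ht.1.trans ht.2))
  have hnonneg : 0 ≤ ∫ s in t..b, f' s ^ 2 := integral_nonneg ht.2 fun _ _ => sq_nonneg _
  calc (f t - f b) ^ 2 = (∫ s in t..b, f' s) ^ 2 := by rw [hftc]; ring
    _ ≤ (b - t) * ∫ s in t..b, f' s ^ 2 := hcs
    _ ≤ (b - a) * ∫ s in a..b, f' s ^ 2 :=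
      mul_le_mul (by linarith [ht.1]) hmono hnonneg (by linarith [ht.1, ht.2])

theorem sq_integral_sub_right_le_of_hasDerivWithinAt_Icc (hab : a ≤ b)
    (hf : ∀ t ∈ Icc a b, HasDerivWithinAt f (f' t) (Icc a b) t)
    (hf' : ContinuousOn f' (Icc a b)) :
    (∫ t in a..b, (f t - f b)) ^ 2 ≤ (b - a) ^ 3 * ∫ s in a..b, f' s ^ 2 := by
  have hdev : ContinuousOn (fun t => f t - f b) (Icc a b) :=
    (HasDerivWithinAt.continuousOn hf).sub continuousOn_const
  have hcs := sq_intervalIntegral_le_mul_integral_sq hab (hdev.intervalIntegrable_of_Icc hab)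
    ((hdev.pow 2).intervalIntegrable_of_Icc hab)
  have hpt := integral_mono_on (μ := volume) hab ((hdev.pow 2).intervalIntegrable_of_Icc hab)
    intervalIntegrable_const fun t ht => sq_sub_right_le_of_hasDerivWithinAt_Icc hf hf' ht
  rw [integral_const, smul_eq_mul] at hpt
  calc (∫ t in a..b, (f t - f b)) ^ 2 ≤ (b - a) * ∫ t in a..b, (f t - f b) ^ 2 := hcs
    _ ≤ (b - a) * ((b - a) * ((b - a) * ∫ s in a..b, f' s ^ 2)) :=
      mul_le_mul_of_nonneg_left hpt (sub_nonneg.mpr hab)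
    _ = (b - a) ^ 3 * ∫ s in a..b, f' s ^ 2 := by ring

end Deviation

theorem sum_integral_uniform_partition {g : ℝ → ℝ} {p : ℕ} (hp : 1 ≤ p)
    (hg : IntervalIntegrable g volume 0 1) :
    ∑ l ∈ Finset.Icc 1 p, ∫ t in ((l : ℝ) - 1) / p..(l : ℝ) / p, g t =
      ∫ t in (0 : ℝ)..1, g t := by
  have hp0 : (0 : ℝ) < p := by exact_mod_cast hp
  have hadj := sum_integral_adjacent_intervals (μ := volume) (f := g) (n := p)
    (a := fun k : ℕ => (k : ℝ) / p) fun k hk => hg.mono_set <| by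
      rw [uIcc_of_le zero_le_one, uIcc_of_le (by gcongr; linarith)]
      refine Icc_subset_Icc (by positivity) ?_
      rw [div_le_one hp0]
      exact_mod_cast hk
  simp only [Nat.cast_zero, zero_div, div_self hp0.ne'] at hadj
  rw [← hadj, ← Finset.Ico_add_one_right_eq_Icc, Finset.sum_Ico_eq_sum_range,
    Nat.add_sub_cancel]
  refine Finset.sum_congr rfl fun k _ => ?_
  congr 1 <;> push_cast <;> ring

theorem sq_mul_integral_sub_right_le_of_mem_Icc {f f' : ℝ → ℝ}
    (hf : ∀ t ∈ Icc (0 : ℝ) 1, HasDerivWithinAt f (f' t) (Icc 0 1) t)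
    (hf' : ContinuousOn f' (Icc 0 1)) {p l : ℕ} (hl : l ∈ Finset.Icc 1 p) :
    ((p : ℝ) * ∫ t in ((l : ℝ) - 1) / p..(l : ℝ) / p, (f t - f ((l : ℝ) / p))) ^ 2 ≤
      (p : ℝ)⁻¹ * ∫ t in ((l : ℝ) - 1) / p..(l : ℝ) / p, f' t ^ 2 := by
  rw [Finset.mem_Icc] at hl
  have hl1 : (1 : ℝ) ≤ l := by exact_mod_cast hl.1
  have hlp : (l : ℝ) ≤ p := by exact_mod_cast hl.2
  have hp0 : (0 : ℝ) < p := by linarith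
  have hsub : Icc (((l : ℝ) - 1) / p) ((l : ℝ) / p) ⊆ Icc 0 1 :=
    Icc_subset_Icc (by positivity) ((div_le_one hp0).mpr hlp)
  have hdev := sq_integral_sub_right_le_of_hasDerivWithinAt_Icc (by gcongr; linarith)
    (fun t ht => (hf t (hsub ht)).mono hsub) (hf'.mono hsub)
  rw [show (l : ℝ) / p - ((l : ℝ) - 1) / p = (p : ℝ)⁻¹ by field_simp; ring] at hdev
  calc _ ≤ (p : ℝ) ^ 2 *
        ((p : ℝ)⁻¹ ^ 3 * ∫ t in ((l : ℝ) - 1) / p..(l : ℝ) / p, f' t ^ 2) := by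
        rw [mul_pow]; gcongr
    _ = (p : ℝ)⁻¹ * ∫ t in ((l : ℝ) - 1) / p..(l : ℝ) / p, f' t ^ 2 := by field_simp

/-- Bound for the averaged deviations: with
`h_l(f) = p ∫_{(l−1)/p}^{l/p} (f(t) − f(l/p)) dt`, one has
`(1/p) Σ_{l=1}^p h_l(f)² ≤ p^{−2} ∫_0^1 f′(t)² dt`. -/
theorem stmt13 (p : ℕ) (hp : 1 ≤ p) (f f' : ℝ → ℝ)
    (hdf : ∀ t ∈ Set.Icc (0 : ℝ) 1, HasDerivWithinAt f (f' t) (Set.Icc 0 1) t)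
    (hcf' : ContinuousOn f' (Set.Icc 0 1))
    (hfun : ℕ → ℝ)
    (hh : ∀ l : ℕ, hfun l = (p : ℝ) * ∫ t in (((l : ℝ) - 1) / p)..((l : ℝ) / p), (f t - f ((l : ℝ) / p))) :
    (1 / (p : ℝ)) * ∑ l ∈ Finset.Icc 1 p, hfun l ^ 2 ≤
      ((p : ℝ) ^ 2)⁻¹ * ∫ t in (0 : ℝ)..1, f' t ^ 2 := by
  calc (1 / (p : ℝ)) * ∑ l ∈ Finset.Icc 1 p, hfun l ^ 2
      ≤ (p : ℝ)⁻¹ * ∑ l ∈ Finset.Icc 1 p,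
          (p : ℝ)⁻¹ * ∫ t in ((l : ℝ) - 1) / p..(l : ℝ) / p, f' t ^ 2 := by
        rw [one_div]
        gcongr with l hl
        rw [hh l]
        exact sq_mul_integral_sub_right_le_of_mem_Icc hdf hcf' hl
    _ = ((p : ℝ) ^ 2)⁻¹ * ∫ t in (0 : ℝ)..1, f' t ^ 2 := by
        rw [← Finset.mul_sum, sum_integral_uniform_partition (g := fun t => f' t ^ 2) hp
          ((hcf'.pow 2).intervalIntegrable_of_Icc zero_le_one), ← mul_assoc, ← mul_inv, ← sq]
end

section
/- Let n ≥ 1, θ ≤ 0, and let g : [0, n] → ℝ be square integrable. Then |θ ∫_0^n e^{θv} (∫_v^n g(t) g(t−v) dt) dv| ≤ ∫_0^n g(t)² dt. In particular, θ ∫_0^n e^{θv} (∫_v^n g(t) g(t−v) dt) dv + ∫_0^n g(t)² dt ≤ 2 ∫_0^n g(t)² dt. -/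
/-!
By AM–GM, `|g t * g (t - v)| ≤ (g t ^ 2 + g (t - v) ^ 2) / 2`, so the autocorrelation of `g` at
any lag `v ∈ [0, n]` is bounded by `∫_0^n g²`. For `θ ≤ 0` the weight `-θ e^{θv}` has total mass
`1 - e^{θn} ≤ 1` on `[0, n]`, so averaging against it keeps the bound.
-/

open intervalIntegral Real
open MeasureTheory (volume)

theorem abs_mul_le_add_sq_div_two (x y : ℝ) : |x * y| ≤ (x ^ 2 + y ^ 2) / 2 := by
  have := two_mul_le_add_sq |x| |y|
  rw [sq_abs, sq_abs, mul_assoc, ← abs_mul] at this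
  linarith

theorem abs_integral_mul_comp_sub_le_integral_sq {g : ℝ → ℝ} {b v : ℝ}
    (hg : IntervalIntegrable (fun t => g t ^ 2) volume 0 b) (hv0 : 0 ≤ v) (hvb : v ≤ b) :
    |∫ t in v..b, g t * g (t - v)| ≤ ∫ t in 0..b, g t ^ 2 := by
  have hg_sub : ∀ {c d}, 0 ≤ c → c ≤ d → d ≤ b →
      IntervalIntegrable (fun t => g t ^ 2) volume c d := fun hc hcd hdb =>
    hg.mono_set <| by
      rw [Set.uIcc_of_le hcd, Set.uIcc_of_le (hc.trans (hcd.trans hdb))]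
      exact Set.Icc_subset_Icc hc hdb
  have hgv : IntervalIntegrable (fun t => g t ^ 2) volume v b := hg_sub hv0 hvb le_rfl
  have hgv_shift : IntervalIntegrable (fun t => g (t - v) ^ 2) volume v b := by
    simpa using (hg_sub le_rfl (sub_nonneg.2 hvb) (sub_le_self b hv0)).comp_sub_right v
  have h_tail : ∫ t in v..b, g t ^ 2 ≤ ∫ t in 0..b, g t ^ 2 :=
    integral_mono_interval hv0 hvb le_rfl (.of_forall fun _ => sq_nonneg _) hg
  have h_head : ∫ t in v..b, g (t - v) ^ 2 ≤ ∫ t in 0..b, g t ^ 2 := by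
    rw [integral_comp_sub_right (fun t => g t ^ 2), sub_self]
    exact integral_mono_interval le_rfl (sub_nonneg.2 hvb) (sub_le_self b hv0)
      (.of_forall fun _ => sq_nonneg _) hg
  calc |∫ t in v..b, g t * g (t - v)|
      ≤ ∫ t in v..b, (g t ^ 2 + g (t - v) ^ 2) / 2 :=
        norm_integral_le_of_norm_le (f := fun t => g t * g (t - v)) hvb
          (.of_forall fun _ _ => abs_mul_le_add_sq_div_two _ _) ((hgv.add hgv_shift).div_const 2)
    _ = ((∫ t in v..b, g t ^ 2) + ∫ t in v..b, g (t - v) ^ 2) / 2 := by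
        rw [integral_div, integral_add hgv hgv_shift]
    _ ≤ ∫ t in 0..b, g t ^ 2 := by linarith

theorem integral_mul_exp_mul (θ a b : ℝ) :
    ∫ v in a..b, θ * exp (θ * v) = exp (θ * b) - exp (θ * a) := by
  refine integral_eq_sub_of_hasDerivAt (f := fun v => exp (θ * v)) (fun v _ => ?_)
    ((by fun_prop : Continuous fun v => θ * exp (θ * v)).intervalIntegrable _ _)
  simpa [mul_comm] using ((hasDerivAt_id v).const_mul θ).exp

theorem abs_mul_integral_exp_mul_le {θ b C : ℝ} {F : ℝ → ℝ} (hθ : θ ≤ 0) (hb : 0 ≤ b)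
    (hF : ∀ v ∈ Set.Icc 0 b, |F v| ≤ C) :
    |θ * ∫ v in 0..b, exp (θ * v) * F v| ≤ C := by
  have hC : 0 ≤ C := (abs_nonneg _).trans (hF 0 ⟨le_rfl, hb⟩)
  have h_int : |∫ v in 0..b, exp (θ * v) * F v| ≤ ∫ v in 0..b, exp (θ * v) * C := by
    refine norm_integral_le_of_norm_le (f := fun v => exp (θ * v) * F v) hb
      (.of_forall fun v hv => ?_)
      ((by fun_prop : Continuous fun v => exp (θ * v) * C).intervalIntegrable _ _)
    rw [Real.norm_eq_abs, abs_mul, abs_of_pos (exp_pos _)]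
    exact mul_le_mul_of_nonneg_left (hF v (Set.Ioc_subset_Icc_self hv)) (exp_pos _).le
  have h_exp : exp (θ * b) ≤ 1 := exp_le_one_iff.2 (mul_nonpos_of_nonpos_of_nonneg hθ hb)
  calc |θ * ∫ v in 0..b, exp (θ * v) * F v|
      ≤ -θ * ∫ v in 0..b, exp (θ * v) * C := by
        rw [abs_mul, abs_of_nonpos hθ]
        exact mul_le_mul_of_nonneg_left h_int (neg_nonneg.2 hθ)
    _ = (1 - exp (θ * b)) * C := by
        rw [integral_mul_const, ← mul_assoc, neg_mul, ← integral_const_mul, integral_mul_exp_mul]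
        simp only [mul_zero, exp_zero]
        ring
    _ ≤ C := by nlinarith [exp_pos (θ * b)]

theorem stmt15_general (n : ℕ) (θ : ℝ) (hθ : θ ≤ 0)
    (g : ℝ → ℝ)
    (hg : MeasureTheory.IntegrableOn (fun t => g t ^ 2) (Set.Icc 0 (n : ℝ))) :
    |θ * ∫ v in (0 : ℝ)..(n : ℝ), Real.exp (θ * v) * ∫ t in v..(n : ℝ), g t * g (t - v)| ≤
        ∫ t in (0 : ℝ)..(n : ℝ), g t ^ 2 ∧
      θ * (∫ v in (0 : ℝ)..(n : ℝ), Real.exp (θ * v) * ∫ t in v..(n : ℝ), g t * g (t - v)) +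
          (∫ t in (0 : ℝ)..(n : ℝ), g t ^ 2) ≤
        2 * ∫ t in (0 : ℝ)..(n : ℝ), g t ^ 2 := by
  have hn : (0 : ℝ) ≤ n := Nat.cast_nonneg n
  have hg' : IntervalIntegrable (fun t => g t ^ 2) volume 0 n :=
    (intervalIntegrable_iff_integrableOn_Icc_of_le hn).2 hg
  have h_abs := abs_mul_integral_exp_mul_le hθ hn fun v hv =>
    abs_integral_mul_comp_sub_le_integral_sq hg' hv.1 hv.2
  exact ⟨h_abs, by linarith [(le_abs_self _).trans h_abs]⟩

/-- Autocorrelation bound for the Ornstein–Uhlenbeck variance formula: for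
`θ ≤ 0` and square-integrable `g` on `[0,n]`,
`|θ ∫_0^n e^{θv} (∫_v^n g(t)g(t−v) dt) dv| ≤ ∫_0^n g²`, hence
`θ ∫_0^n e^{θv} (∫_v^n g(t)g(t−v) dt) dv + ∫_0^n g² ≤ 2 ∫_0^n g²`. -/
theorem stmt15 (n : ℕ) (hn : 1 ≤ n) (θ : ℝ) (hθ : θ ≤ 0)
    (g : ℝ → ℝ) (hgm : Measurable g)
    (hg : MeasureTheory.IntegrableOn (fun t => g t ^ 2) (Set.Icc 0 (n : ℝ))) :
    |θ * ∫ v in (0 : ℝ)..(n : ℝ), Real.exp (θ * v) * ∫ t in v..(n : ℝ), g t * g (t - v)| ≤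
        ∫ t in (0 : ℝ)..(n : ℝ), g t ^ 2 ∧
      θ * (∫ v in (0 : ℝ)..(n : ℝ), Real.exp (θ * v) * ∫ t in v..(n : ℝ), g t * g (t - v)) +
          (∫ t in (0 : ℝ)..(n : ℝ), g t ^ 2) ≤
        2 * ∫ t in (0 : ℝ)..(n : ℝ), g t ^ 2 :=
  stmt15_general n θ hθ g hg
end
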